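/- Let (X,d) be a separable metric space which is an indecomposable semicontinuum with more than one point. Then there exists a sequence (K_n)_{n<ω} of pairwise disjoint proper subcontinua of X such that for every x ∈ X, the distance d(x, K_n) tends to 0 as n → ∞. -/

import Mathlib

/-!
If `X` is compact, each composant is meagre: a proper subcontinuum through `x` misses some
basic open set `U`, so it lies in the component of `x` in `Uᶜ`, which is nowhere dense because in
an indecomposable space a proper subcontinuum has connected complement. Baire's theorem then
gives points `xₙ` in pairwise distinct composants, and proper subcontinua `Kₙ ∋ xₙ` are pairwise
disjoint, while boundary bumping lets `Kₙ` meet any finitely many given open sets.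

If `X` is not compact, every subcontinuum `T` is proper, hence nowhere dense. If no subcontinuum
of `Tᶜ` met all of finitely many open sets `Uᵢ ⊆ Tᶜ`, the closures of `T` together with the
subcontinua of `Tᶜ` missing `Uᵢ` (each of which accumulates at `T` by boundary bumping inside a
subcontinuum joining it to `T`) would be finitely many proper subcontinua covering `X`. This
builds a tower `T₀ ⊆ T₁ ⊆ ⋯` with pairwise disjoint `Kₙ ⊆ Tₙ₊₁ \ Tₙ`.

In both cases `Kₙ` is made to meet the `1/(n+1)`-balls around the first `n + 1` points of a dense
sequence, which gives `d(x, Kₙ) → 0`.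
-/

open Set Metric Filter Topology Function

def IsIndecomposable (X : Type*) [TopologicalSpace X] : Prop :=
  ¬ ∃ A B : Set X,
    IsClosed A ∧ IsConnected A ∧ A ≠ univ ∧ IsClosed B ∧ IsConnected B ∧ B ≠ univ ∧ A ∪ B = univ

def IsSemicontinuum (X : Type*) [TopologicalSpace X] : Prop :=
  ∀ x y : X, ∃ K : Set X, IsCompact K ∧ IsConnected K ∧ K.Nontrivial ∧ x ∈ K ∧ y ∈ K

section Topology

variable {X : Type*} [TopologicalSpace X]

theorem IsClosed.connectedComponentIn {F : Set X} (hF : IsClosed F) (x : X) :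
    IsClosed (connectedComponentIn F x) := by
  by_cases hx : x ∈ F
  · refine closure_subset_iff_isClosed.1 <| isPreconnected_connectedComponentIn.closure
      |>.subset_connectedComponentIn (subset_closure (mem_connectedComponentIn hx)) ?_
    exact closure_minimal (connectedComponentIn_subset F x) hF
  · simp [connectedComponentIn_eq_empty hx]

theorem exists_isClopen_of_connectedComponent_subset [T2Space X] [CompactSpace X] {x : X}
    {U : Set X} (hU : IsOpen U) (h : connectedComponent x ⊆ U) :
    ∃ V, IsClopen V ∧ x ∈ V ∧ V ⊆ U := by
  rw [connectedComponent_eq_iInter_isClopen] at h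
  obtain ⟨t, ht⟩ := hU.isClosed_compl.isCompact.elim_finite_subfamily_closed
    (fun s : {s : Set X // IsClopen s ∧ x ∈ s} ↦ (s : Set X)) (fun s ↦ s.2.1.1)
    (disjoint_compl_left_iff_subset.2 h).inter_eq
  exact ⟨⋂ s ∈ t, s, isClopen_biInter_finset fun s _ ↦ s.2.1, mem_iInter₂.2 fun s _ ↦ s.2.2,
    disjoint_compl_left_iff_subset.1 (disjoint_iff_inter_eq_empty.2 ht)⟩

/-- The boundary bumping theorem. -/
theorem nonempty_connectedComponentIn_inter_closure_diff [T2Space X]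
    {M F : Set X} {z : X} (hMc : IsPreconnected M) (hM : IsCompact M) (hF : IsClosed F)
    (hFM : F ⊆ M) (hMF : ¬ M ⊆ F) (hz : z ∈ F) :
    (connectedComponentIn F z ∩ closure (M \ F)).Nonempty := by
  by_contra hempty
  rw [not_nonempty_iff_eq_empty, ← disjoint_iff_inter_eq_empty] at hempty
  have : CompactSpace F := isCompact_iff_compactSpace.1 (hM.of_isClosed_subset hF hFM)
  have hsub : connectedComponent (⟨z, hz⟩ : F) ⊆ Subtype.val ⁻¹' (closure (M \ F))ᶜ := by
    intro w hw
    refine disjoint_left.1 hempty ?_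
    rw [connectedComponentIn_eq_image hz]
    exact mem_image_of_mem _ hw
  obtain ⟨V, hV, hzV, hVsub⟩ := exists_isClopen_of_connectedComponent_subset
    (isClosed_closure.isOpen_compl.preimage continuous_subtype_val) hsub
  obtain ⟨O, hO, rfl⟩ := isOpen_induced_iff.1 hV.isOpen
  have hE : IsClosed (F ∩ O) := by
    rw [← Subtype.image_preimage_coe]
    exact hF.isClosedEmbedding_subtypeVal.isClosedMap _ hV.isClosed
  have hcover : M ⊆ (O \ closure (M \ F)) ∪ (F ∩ O)ᶜ := by
    intro m hm
    by_cases hmE : m ∈ F ∩ O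
    · exact Or.inl ⟨hmE.2, hVsub (a := ⟨m, hmE.1⟩) hmE.2⟩
    · exact Or.inr hmE
  have hdisj : M ∩ ((O \ closure (M \ F)) ∩ (F ∩ O)ᶜ) = ∅ :=
    eq_empty_of_forall_notMem fun m ⟨hm, ⟨hmO, hmcl⟩, hmE⟩ ↦
      hmcl (subset_closure ⟨hm, fun hmF ↦ hmE ⟨hmF, hmO⟩⟩)
  rcases isPreconnected_iff_subset_of_disjoint.1 hMc _ _ (hO.sdiff isClosed_closure)
    hE.isOpen_compl hcover hdisj with hMO | hME
  · exact hMF fun m hm ↦ by_contra fun hmF ↦ (hMO hm).2 (subset_closure ⟨hm, hmF⟩)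
  · exact hME (hFM hz) ⟨hz, hzV⟩

theorem IsPreconnected.union_of_isOpen [PreconnectedSpace X] {H P : Set X}
    (hH : IsPreconnected H) (hP : IsOpen P) (hHP : IsClosed (H ∪ P)) :
    IsPreconnected (H ∪ P) := by
  rw [isPreconnected_iff_subset_of_fully_disjoint_closed hHP]
  intro u v hu hv hsub huv
  wlog hHu : H ⊆ u generalizing u v
  · have hHv := (isPreconnected_iff_subset_of_disjoint_closed.1 hH u v hu hv
      (subset_union_left.trans hsub) (by rw [huv.inter_eq, inter_empty])).resolve_left hHu
    exact (this v u hv hu (union_comm u v ▸ hsub) huv.symm hHv).symm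
  -- the part of `H ∪ P` in `v` is closed, and open as it equals `P \ u`
  have hB : (H ∪ P) ∩ v = P ∩ uᶜ := by
    ext x
    constructor
    · rintro ⟨hx, hxv⟩
      exact ⟨hx.resolve_left fun hxH ↦ disjoint_left.1 huv (hHu hxH) hxv,
        fun hxu ↦ disjoint_left.1 huv hxu hxv⟩
    · rintro ⟨hxP, hxu⟩
      exact ⟨Or.inr hxP, (hsub (Or.inr hxP)).resolve_left hxu⟩
  rcases isClopen_iff.1 ⟨hHP.inter hv, hB ▸ hP.inter hu.isOpen_compl⟩ with hB0 | hB1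
  · exact Or.inl fun x hx ↦ (hsub hx).resolve_right fun hxv ↦
      eq_empty_iff_forall_notMem.1 hB0 x ⟨hx, hxv⟩
  · exact Or.inr fun x hx ↦ (eq_univ_iff_forall.1 hB1 x).2

end Topology

namespace IsIndecomposable

variable {X : Type*} [TopologicalSpace X] (hX : IsIndecomposable X)
include hX

theorem union_ne_univ {A B : Set X} (hA : IsClosed A) (hAc : IsPreconnected A) (hAu : A ≠ univ)
    (hB : IsClosed B) (hBc : IsPreconnected B) (hBu : B ≠ univ) : A ∪ B ≠ univ := by
  rcases A.eq_empty_or_nonempty with rfl | hAne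
  · simpa
  rcases B.eq_empty_or_nonempty with rfl | hBne
  · simpa
  exact fun hAB ↦ hX ⟨A, B, hA, ⟨hAne, hAc⟩, hAu, hB, ⟨hBne, hBc⟩, hBu, hAB⟩

theorem biUnion_ne_univ {ι : Type*} {s : Set ι} (hs : s.Finite) {A : ι → Set X} (x : X)
    (hx : ∀ i ∈ s, x ∈ A i) (hA : ∀ i ∈ s, IsClosed (A i)) (hAc : ∀ i ∈ s, IsPreconnected (A i))
    (hAu : ∀ i ∈ s, A i ≠ univ) : ⋃ i ∈ s, A i ≠ univ := by
  induction s, hs using Set.Finite.induction_on with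
  | empty => simpa using (ne_univ_iff_exists_notMem _).2 ⟨x, notMem_empty x⟩
  | @insert i s _ hs ih =>
    simp only [forall_mem_insert] at hx hA hAc hAu
    rw [biUnion_insert]
    refine hX.union_ne_univ hA.1 hAc.1 hAu.1 (hs.isClosed_biUnion hA.2) ?_
      (ih hx.2 hA.2 hAc.2 hAu.2)
    rw [← sUnion_image]
    exact isPreconnected_sUnion x _ (forall_mem_image.2 hx.2) (forall_mem_image.2 hAc.2)

variable [PreconnectedSpace X]

/-- If `Hᶜ` split into open pieces `P` and `Q`, then `H ∪ P` and `H ∪ Q` would decompose `X`. -/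
theorem isPreconnected_compl {H : Set X} (hH : IsClosed H) (hHc : IsPreconnected H) :
    IsPreconnected Hᶜ := by
  by_contra hsplit
  simp only [IsPreconnected, not_forall, not_nonempty_iff_eq_empty] at hsplit
  obtain ⟨u, v, hu, hv, hcover, ⟨p, hpH, hpu⟩, ⟨q, hqH, hqv⟩, huv⟩ := hsplit
  have hsplit : ∀ x ∉ H, x ∈ u ↔ x ∉ v := fun x hx ↦
    ⟨fun hxu hxv ↦ eq_empty_iff_forall_notMem.1 huv x ⟨hx, hxu, hxv⟩, (hcover hx).resolve_right⟩
  have hP : H ∪ Hᶜ ∩ u = (Hᶜ ∩ v)ᶜ := by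
    ext x; by_cases hx : x ∈ H <;> simp [hx, hsplit x]
  have hQ : H ∪ Hᶜ ∩ v = (Hᶜ ∩ u)ᶜ := by
    ext x; by_cases hx : x ∈ H <;> simp [hx, hsplit x]
  have hPc : IsClosed (H ∪ Hᶜ ∩ u) := hP ▸ (hH.isOpen_compl.inter hv).isClosed_compl
  have hQc : IsClosed (H ∪ Hᶜ ∩ v) := hQ ▸ (hH.isOpen_compl.inter hu).isClosed_compl
  refine hX.union_ne_univ hPc (hHc.union_of_isOpen (hH.isOpen_compl.inter hu) hPc)
    (ne_univ_iff_exists_notMem _ |>.2 ⟨q, hP ▸ not_not.2 ⟨hqH, hqv⟩⟩) hQc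
    (hHc.union_of_isOpen (hH.isOpen_compl.inter hv) hQc)
    (ne_univ_iff_exists_notMem _ |>.2 ⟨p, hQ ▸ not_not.2 ⟨hpH, hpu⟩⟩) ?_
  refine eq_univ_of_forall fun x ↦ ?_
  by_cases hxH : x ∈ H
  · exact Or.inl (Or.inl hxH)
  · rcases hcover hxH with hxu | hxv
    · exact Or.inl (Or.inr ⟨hxH, hxu⟩)
    · exact Or.inr (Or.inr ⟨hxH, hxv⟩)

theorem interior_eq_empty {H : Set X} (hH : IsClosed H) (hHc : IsPreconnected H)
    (hHu : H ≠ univ) : interior H = ∅ := by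
  by_contra hint
  refine hX.union_ne_univ hH hHc hHu isClosed_closure (hX.isPreconnected_compl hH hHc).closure
    (by rwa [closure_compl, compl_ne_univ, nonempty_iff_ne_empty]) ?_
  exact eq_univ_of_forall fun x ↦ (em (x ∈ H)).imp id fun hx ↦ subset_closure hx

end IsIndecomposable

section ContinuumComponent

variable {X : Type*} [TopologicalSpace X]

def continuumComponentIn (F : Set X) (x : X) : Set X :=
  ⋃₀ {M | IsCompact M ∧ IsPreconnected M ∧ x ∈ M ∧ M ⊆ F}

theorem mem_continuumComponentIn {F : Set X} {x : X} (hx : x ∈ F) :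
    x ∈ continuumComponentIn F x :=
  ⟨{x}, ⟨isCompact_singleton, isPreconnected_singleton, rfl, singleton_subset_iff.2 hx⟩, rfl⟩

theorem isPreconnected_continuumComponentIn (F : Set X) (x : X) :
    IsPreconnected (continuumComponentIn F x) :=
  isPreconnected_sUnion x _ (fun _ hM ↦ hM.2.2.1) fun _ hM ↦ hM.2.1

theorem exists_isCompact_isPreconnected_superset_of_subset_continuumComponentIn {F s : Set X}
    {x : X} (hx : x ∈ F) (hs : s.Finite) (hsF : s ⊆ continuumComponentIn F x) :
    ∃ L, IsCompact L ∧ IsPreconnected L ∧ x ∈ L ∧ s ⊆ L ∧ L ⊆ F := by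
  induction s, hs using Set.Finite.induction_on with
  | empty =>
    exact ⟨{x}, isCompact_singleton, isPreconnected_singleton, rfl, empty_subset _,
      singleton_subset_iff.2 hx⟩
  | @insert y s _ _ ih =>
    obtain ⟨L, hL, hLc, hxL, hsL, hLF⟩ := ih ((subset_insert y s).trans hsF)
    obtain ⟨M, ⟨hM, hMc, hxM, hMF⟩, hyM⟩ := hsF (mem_insert y s)
    exact ⟨L ∪ M, hL.union hM, hLc.union x hxL hxM hMc, Or.inl hxL,
      insert_subset (Or.inr hyM) (hsL.trans subset_union_left), union_subset hLF hMF⟩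

end ContinuumComponent

section Semicontinuum

variable {X : Type*} [MetricSpace X]

theorem IsSemicontinuum.closure_continuumComponentIn_compl_inter_nonempty
    (hX : IsSemicontinuum X) {K : Set X} (hK : IsClosed K) (hKne : K.Nonempty) {z : X}
    (hz : z ∉ K) : (closure (continuumComponentIn Kᶜ z) ∩ K).Nonempty := by
  obtain ⟨y, hy⟩ := hKne
  obtain ⟨M, hM, hMc, -, hzM, hyM⟩ := hX z y
  have hC : IsCompact (closure (continuumComponentIn Kᶜ z) ∩ M) := hM.inter_left isClosed_closure
  obtain ⟨p, ⟨hpC, hpM⟩, hpmin⟩ := hC.exists_isMinOn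
    ⟨z, subset_closure (mem_continuumComponentIn hz), hzM⟩ (continuous_infDist_pt K).continuousOn
  refine ⟨p, hpC, by_contra fun hpK ↦ ?_⟩
  -- bump out of `{w ∈ M | ε / 2 ≤ infDist w K}` to get below the minimum `ε` of `infDist · K`
  set ε := infDist p K
  have hε : 0 < ε := (hK.notMem_iff_infDist_pos ⟨y, hy⟩).1 hpK
  set F := M ∩ {w | ε / 2 ≤ infDist w K}
  have hF : IsClosed F := hM.isClosed.inter (isClosed_le continuous_const (continuous_infDist_pt K))
  have hzF : z ∈ F := by
    have : ε ≤ infDist z K := hpmin ⟨subset_closure (mem_continuumComponentIn hz), hzM⟩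
    exact ⟨hzM, show ε / 2 ≤ infDist z K by linarith⟩
  have hMF : ¬ M ⊆ F := fun h ↦ by
    have := (h hyM).2
    rw [mem_ofPred_eq, infDist_zero_of_mem hy] at this
    linarith
  obtain ⟨w, hwF, hwcl⟩ := nonempty_connectedComponentIn_inter_closure_diff hMc.isPreconnected hM
    hF inter_subset_left hMF hzF
  have hFK : F ⊆ Kᶜ := fun v hv hvK ↦ by
    have := hv.2
    rw [mem_ofPred_eq, infDist_zero_of_mem hvK] at this
    linarith
  have hw : w ∈ continuumComponentIn Kᶜ z :=
    ⟨connectedComponentIn F z, ⟨(hM.of_isClosed_subset (hF.connectedComponentIn z)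
      ((connectedComponentIn_subset F z).trans inter_subset_left)),
      isPreconnected_connectedComponentIn, mem_connectedComponentIn hzF,
      (connectedComponentIn_subset F z).trans hFK⟩, hwF⟩
  have hwM : w ∈ M := closure_minimal sdiff_subset hM.isClosed hwcl
  have hwε : infDist w K ≤ ε / 2 :=
    closure_minimal (fun v hv ↦ le_of_lt (not_le.1 fun h ↦ hv.2 ⟨hv.1, h⟩))
      (isClosed_le (continuous_infDist_pt K) continuous_const) hwcl
  have : ε ≤ infDist w K := hpmin ⟨subset_closure hw, hwM⟩
  linarith

theorem IsSemicontinuum.isPreconnected_union_biUnion_closure_continuumComponentIn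
    (hX : IsSemicontinuum X) {K : Set X} (hK : IsClosed K) (hKc : IsPreconnected K)
    (hKne : K.Nonempty) {S : Set X} (hS : S ⊆ Kᶜ) :
    IsPreconnected (K ∪ ⋃ z ∈ S, closure (continuumComponentIn Kᶜ z)) := by
  obtain ⟨x, hx⟩ := hKne
  refine isPreconnected_of_forall x fun y hy ↦ ?_
  rcases hy with hyK | hy
  · exact ⟨K, subset_union_left, hx, hyK, hKc⟩
  obtain ⟨z, hzS, hyz⟩ := mem_iUnion₂.1 hy
  obtain ⟨p, hpC, hpK⟩ :=
    hX.closure_continuumComponentIn_compl_inter_nonempty hK ⟨x, hx⟩ (hS hzS)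
  exact ⟨K ∪ closure (continuumComponentIn Kᶜ z),
    union_subset_union_right K (subset_biUnion_of_mem (u := fun z ↦ closure _) hzS), Or.inl hx,
    Or.inr hyz, hKc.union p hpK hpC (isPreconnected_continuumComponentIn _ z).closure⟩

end Semicontinuum

namespace IsIndecomposable

variable {X : Type*} [MetricSpace X] [ConnectedSpace X]

/-- If no continuum component of `Kᶜ` met every `U ∈ 𝒰`, the sets
`closure (K ∪ ⋃ {closure C | C a continuum component of Kᶜ missing U})`, `U ∈ 𝒰`, would be
finitely many proper subcontinua through `K` covering `X`. -/
theorem exists_isCompact_isPreconnected_disjoint_inter_nonempty (hX : IsIndecomposable X)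
    (hS : IsSemicontinuum X) {K : Set X} (hK : IsCompact K) (hKc : IsPreconnected K)
    (hKne : K.Nonempty) (hKu : K ≠ univ) {𝒰 : Set (Set X)} (h𝒰 : 𝒰.Finite)
    (hopen : ∀ U ∈ 𝒰, IsOpen U) (hne : ∀ U ∈ 𝒰, U.Nonempty) (hdisj : ∀ U ∈ 𝒰, Disjoint U K) :
    ∃ L, IsCompact L ∧ IsPreconnected L ∧ L.Nonempty ∧ Disjoint L K ∧
      ∀ U ∈ 𝒰, (L ∩ U).Nonempty := by
  by_cases hmeet : ∃ z ∉ K, ∀ U ∈ 𝒰, (continuumComponentIn Kᶜ z ∩ U).Nonempty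
  · obtain ⟨z, hzK, hz⟩ := hmeet
    choose! y hyC hyU using hz
    obtain ⟨L, hL, hLc, hzL, hyL, hLK⟩ :=
      exists_isCompact_isPreconnected_superset_of_subset_continuumComponentIn hzK
        (h𝒰.image y) (image_subset_iff.2 hyC)
    exact ⟨L, hL, hLc, ⟨z, hzL⟩, subset_compl_iff_disjoint_right.1 hLK,
      fun U hU ↦ ⟨y U, hyL (mem_image_of_mem y hU), hyU U hU⟩⟩
  push Not at hmeet
  obtain ⟨x, hx⟩ := hKne
  let A : Set X → Set X := fun U ↦ K ∪
    ⋃ z ∈ {z | z ∉ K ∧ continuumComponentIn Kᶜ z ∩ U = ∅}, closure (continuumComponentIn Kᶜ z)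
  have hAU : ∀ U ∈ 𝒰, Disjoint (closure (A U)) U := fun U hU ↦ by
    refine Disjoint.closure_left (disjoint_union_left.2 ⟨(hdisj U hU).symm, ?_⟩) (hopen U hU)
    refine disjoint_iUnion₂_left.2 fun z hz ↦ ?_
    exact (disjoint_iff_inter_eq_empty.2 hz.2).closure_left (hopen U hU)
  refine absurd (eq_univ_of_forall fun w ↦ ?_) (hX.biUnion_ne_univ h𝒰 (A := closure ∘ A) x
    (fun U _ ↦ subset_closure (Or.inl hx)) (fun U _ ↦ isClosed_closure)
    (fun U _ ↦ (hS.isPreconnected_union_biUnion_closure_continuumComponentIn hK.isClosed hKc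
      ⟨x, hx⟩ fun z hz ↦ hz.1).closure)
    fun U hU ↦ (ne_univ_iff_exists_notMem _).2 <|
      (hne U hU).imp fun u hu hu' ↦ disjoint_left.1 (hAU U hU) hu' hu)
  by_cases hwK : w ∈ K
  · obtain ⟨U, hU, -⟩ := hmeet _ ((ne_univ_iff_exists_notMem K).1 hKu).choose_spec
    exact mem_biUnion hU (subset_closure (Or.inl hwK))
  · obtain ⟨U, hU, hwU⟩ := hmeet w hwK
    exact mem_biUnion hU (subset_closure (Or.inr (mem_biUnion ⟨hwK, hwU⟩
      (subset_closure (mem_continuumComponentIn hwK)))))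

theorem exists_tower_step_of_not_compactSpace (hX : IsIndecomposable X) (hS : IsSemicontinuum X)
    (hnc : ¬ CompactSpace X) {T : Set X} (hT : IsCompact T) (hTc : IsPreconnected T)
    (hTne : T.Nonempty) {𝒰 : Set (Set X)} (h𝒰 : 𝒰.Finite) (hopen : ∀ U ∈ 𝒰, IsOpen U)
    (hne : ∀ U ∈ 𝒰, U.Nonempty) :
    ∃ T' L : Set X, IsCompact T' ∧ IsPreconnected T' ∧ T ⊆ T' ∧ L ⊆ T' ∧
      IsCompact L ∧ IsPreconnected L ∧ Disjoint L T ∧ ∀ U ∈ 𝒰, (L ∩ U).Nonempty := by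
  have hTu : T ≠ univ := fun h ↦ hnc (isCompact_univ_iff.1 (h ▸ hT))
  have hdense : Dense Tᶜ :=
    interior_eq_empty_iff_dense_compl.1 (hX.interior_eq_empty hT.isClosed hTc hTu)
  obtain ⟨L, hL, hLc, ⟨z, hzL⟩, hLT, hLU⟩ :=
    hX.exists_isCompact_isPreconnected_disjoint_inter_nonempty hS hT hTc hTne hTu
      (h𝒰.image (· \ T)) (forall_mem_image.2 fun U hU ↦ (hopen U hU).sdiff hT.isClosed)
      (forall_mem_image.2 fun U hU ↦ hdense.inter_open_nonempty U (hopen U hU) (hne U hU))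
      (forall_mem_image.2 fun U _ ↦ disjoint_sdiff_left)
  obtain ⟨t, ht⟩ := hTne
  obtain ⟨M, hM, hMc, -, hzM, htM⟩ := hS z t
  exact ⟨T ∪ M ∪ L, L, (hT.union hM).union hL,
    (hTc.union t ht htM hMc.isPreconnected).union z (Or.inr hzM) hzL hLc,
    subset_union_left.trans subset_union_left, subset_union_right, hL, hLc, hLT,
    fun U hU ↦ (hLU _ (mem_image_of_mem _ hU)).mono (inter_subset_inter_right L sdiff_subset)⟩

/-- A tower `T₀ ⊆ T₁ ⊆ ⋯` of subcontinua with `Kₙ ⊆ Tₙ₊₁` disjoint from `Tₙ`. -/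
theorem exists_pairwise_disjoint_of_not_compactSpace (hX : IsIndecomposable X)
    (hS : IsSemicontinuum X) (hnc : ¬ CompactSpace X) (𝒰 : ℕ → Set (Set X))
    (h𝒰 : ∀ n, (𝒰 n).Finite) (hopen : ∀ n, ∀ U ∈ 𝒰 n, IsOpen U)
    (hne : ∀ n, ∀ U ∈ 𝒰 n, U.Nonempty) :
    ∃ K : ℕ → Set X, (∀ n, IsCompact (K n) ∧ IsPreconnected (K n) ∧ K n ≠ univ) ∧
      Pairwise (Disjoint on K) ∧ ∀ n, ∀ U ∈ 𝒰 n, (K n ∩ U).Nonempty := by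
  let Continuum := {T : Set X // IsCompact T ∧ IsPreconnected T ∧ T.Nonempty}
  have hstep : ∀ n (T : Continuum), ∃ T' : Continuum, ∃ L, T.1 ⊆ T'.1 ∧ L ⊆ T'.1 ∧
      IsCompact L ∧ IsPreconnected L ∧ Disjoint L T.1 ∧ ∀ U ∈ 𝒰 n, (L ∩ U).Nonempty := by
    intro n ⟨T, hT, hTc, hTne⟩
    obtain ⟨T', L, hT', hT'c, hTT', hLT', hL⟩ := hX.exists_tower_step_of_not_compactSpace hS hnc
      hT hTc hTne (h𝒰 n) (hopen n) (hne n)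
    exact ⟨⟨T', hT', hT'c, hTne.mono hTT'⟩, L, hTT', hLT', hL⟩
  choose next K hnext hKnext hK hKc hKdisj hKU using hstep
  obtain ⟨x⟩ := ‹ConnectedSpace X›.toNonempty
  let tower : ℕ → Continuum := fun n ↦
    Nat.rec ⟨{x}, isCompact_singleton, isPreconnected_singleton, singleton_nonempty x⟩ next n
  have hmono : Monotone fun n ↦ (tower n).1 := monotone_nat_of_le_succ fun n ↦ hnext n (tower n)
  refine ⟨fun n ↦ K n (tower n), fun n ↦ ⟨hK n _, hKc n _, fun h ↦ hnc ⟨h ▸ hK n _⟩⟩,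
    (pairwise_disjoint_on _).2 fun m n hmn ↦ ?_, fun n ↦ hKU n _⟩
  exact (hKdisj n _).symm.mono_left ((hKnext m _).trans (hmono (Nat.succ_le_of_lt hmn)))

end IsIndecomposable

section Compact

variable {X : Type*} [TopologicalSpace X]

def composant (x : X) : Set X :=
  {y | ∃ P : Set X, IsCompact P ∧ IsPreconnected P ∧ P ≠ univ ∧ x ∈ P ∧ y ∈ P}

variable [T2Space X] [PreconnectedSpace X]

/-- Each proper subcontinuum through `x` misses a basic open set `U`, so it lies in the
nowhere dense component of `x` in `Uᶜ`. -/
theorem IsIndecomposable.isMeagre_composant [SecondCountableTopology X]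
    (hX : IsIndecomposable X) (x : X) : IsMeagre (composant x) := by
  obtain ⟨b, hbc, hb0, hb⟩ := TopologicalSpace.exists_countable_basis X
  refine (isMeagre_biUnion hbc (f := fun U ↦ connectedComponentIn Uᶜ x)
    fun U hU ↦ IsNowhereDense.isMeagre ?_).mono ?_
  · have hF : IsClosed Uᶜ := (hb.isOpen hU).isClosed_compl
    obtain ⟨u, hu⟩ := nonempty_iff_ne_empty.2 fun h ↦ hb0 (h ▸ hU)
    refine (hF.connectedComponentIn x).isNowhereDense_iff.2 (hX.interior_eq_empty
      (hF.connectedComponentIn x) isPreconnected_connectedComponentIn fun h ↦ ?_)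
    exact connectedComponentIn_subset Uᶜ x (h ▸ mem_univ u) hu
  · rintro y ⟨P, hP, hPc, hPu, hxP, hyP⟩
    obtain ⟨w, hw⟩ := (ne_univ_iff_exists_notMem P).1 hPu
    obtain ⟨U, hU, hwU, hUP⟩ := hb.exists_subset_of_mem_open hw hP.isClosed.isOpen_compl
    exact mem_biUnion hU (hPc.subset_connectedComponentIn hxP (subset_compl_comm.1 hUP) hyP)

variable [CompactSpace X] [Nontrivial X]

theorem exists_isCompact_isPreconnected_ne_univ_inter_nonempty (x : X) {U : Set X}
    (hU : IsOpen U) (hUne : U.Nonempty) :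
    ∃ P, IsCompact P ∧ IsPreconnected P ∧ P ≠ univ ∧ x ∈ P ∧ (P ∩ U).Nonempty := by
  by_cases hxU : x ∈ U
  · exact ⟨{x}, isCompact_singleton, isPreconnected_singleton, singleton_ne_univ x, rfl,
      ⟨x, rfl, hxU⟩⟩
  obtain ⟨c, hc⟩ := hUne
  have hcx : c ∉ ({x} : Set X) := fun h ↦ hxU (mem_singleton_iff.1 h ▸ hc)
  obtain ⟨t, htc, ht, htU⟩ := exists_mem_nhds_isClosed_subset
    ((hU.sdiff isClosed_singleton).mem_nhds ⟨hc, hcx⟩)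
  have hF : IsClosed (interior t)ᶜ := isOpen_interior.isClosed_compl
  have hxF : x ∈ (interior t)ᶜ := fun hx ↦ (htU (interior_subset hx)).2 rfl
  have hcF : c ∉ (interior t)ᶜ := not_not.2 (mem_interior_iff_mem_nhds.2 htc)
  obtain ⟨p, hpP, hpU⟩ := nonempty_connectedComponentIn_inter_closure_diff isPreconnected_univ
    isCompact_univ hF (subset_univ _) (fun h ↦ hcF (h (mem_univ c))) hxF
  rw [← compl_eq_univ_sdiff, compl_compl] at hpU
  exact ⟨connectedComponentIn _ x, (hF.connectedComponentIn x).isCompact,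
    isPreconnected_connectedComponentIn,
    fun h ↦ hcF (connectedComponentIn_subset _ x (h ▸ mem_univ c)), mem_connectedComponentIn hxF,
    ⟨p, hpP, (htU (closure_minimal interior_subset ht hpU)).1⟩⟩

theorem IsIndecomposable.exists_isCompact_isPreconnected_ne_univ_forall_inter_nonempty
    (hX : IsIndecomposable X) (x : X) {𝒰 : Set (Set X)} (h𝒰 : 𝒰.Finite)
    (hopen : ∀ U ∈ 𝒰, IsOpen U) (hne : ∀ U ∈ 𝒰, U.Nonempty) :
    ∃ P, IsCompact P ∧ IsPreconnected P ∧ P ≠ univ ∧ x ∈ P ∧ ∀ U ∈ 𝒰, (P ∩ U).Nonempty := by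
  induction 𝒰, h𝒰 using Set.Finite.induction_on with
  | empty =>
    exact ⟨{x}, isCompact_singleton, isPreconnected_singleton, singleton_ne_univ x, rfl,
      fun _ h ↦ h.elim⟩
  | @insert U 𝒰 _ _ ih =>
    simp only [forall_mem_insert] at hopen hne
    obtain ⟨P, hP, hPc, hPu, hxP, hPU⟩ := ih hopen.2 hne.2
    obtain ⟨Q, hQ, hQc, hQu, hxQ, hQU⟩ :=
      exists_isCompact_isPreconnected_ne_univ_inter_nonempty x hopen.1 hne.1
    refine ⟨P ∪ Q, hP.union hQ, hPc.union x hxP hxQ hQc,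
      hX.union_ne_univ hP.isClosed hPc hPu hQ.isClosed hQc hQu, Or.inl hxP, ?_⟩
    rintro V (rfl | hV)
    · exact hQU.mono (inter_subset_inter_left V subset_union_right)
    · exact (hPU V hV).mono (inter_subset_inter_left V subset_union_left)

/-- Points in pairwise distinct composants carry pairwise disjoint proper subcontinua. -/
theorem IsIndecomposable.exists_pairwise_disjoint_of_compactSpace [SecondCountableTopology X]
    (hX : IsIndecomposable X) (𝒰 : ℕ → Set (Set X)) (h𝒰 : ∀ n, (𝒰 n).Finite)
    (hopen : ∀ n, ∀ U ∈ 𝒰 n, IsOpen U) (hne : ∀ n, ∀ U ∈ 𝒰 n, U.Nonempty) :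
    ∃ K : ℕ → Set X, (∀ n, IsCompact (K n) ∧ IsPreconnected (K n) ∧ K n ≠ univ) ∧
      Pairwise (Disjoint on K) ∧ ∀ n, ∀ U ∈ 𝒰 n, (K n ∩ U).Nonempty := by
  have hnew : ∀ s : Finset X, ∃ z, ∀ y ∈ s, z ∉ composant y := fun s ↦ by
    have hs : IsMeagre (⋃ y ∈ s, composant y) :=
      isMeagre_biUnion s.countable_toSet fun y _ ↦ hX.isMeagre_composant y
    obtain ⟨z, hz⟩ := (ne_univ_iff_exists_notMem (⋃ y ∈ s, composant y)).1
      fun h ↦ not_isMeagre_of_isOpen isOpen_univ univ_nonempty (h ▸ hs)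
    exact ⟨z, fun y hy hzy ↦ hz (mem_biUnion hy hzy)⟩
  obtain ⟨x, -, hx⟩ := exists_seq_of_forall_finset_exists (fun _ ↦ True)
    (fun y z ↦ z ∉ composant y) fun s _ ↦ (hnew s).imp fun _ h ↦ ⟨trivial, h⟩
  choose K hK hKc hKu hxK hKU using fun n ↦
    hX.exists_isCompact_isPreconnected_ne_univ_forall_inter_nonempty (x n) (h𝒰 n) (hopen n) (hne n)
  refine ⟨K, fun n ↦ ⟨hK n, hKc n, hKu n⟩, (pairwise_disjoint_on K).2 fun m n hmn ↦ ?_, hKU⟩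
  refine disjoint_left.2 fun w hwm hwn ↦ hx m n hmn ⟨K m ∪ K n, (hK m).union (hK n),
    (hKc m).union w hwm hwn (hKc n), ?_, Or.inl (hxK m), Or.inr (hxK n)⟩
  exact hX.union_ne_univ (hK m).isClosed (hKc m) (hKu m) (hK n).isClosed (hKc n) (hKu n)

end Compact

section Metric

variable {X : Type*} [MetricSpace X]

theorem IsIndecomposable.exists_pairwise_disjoint [TopologicalSpace.SeparableSpace X]
    [ConnectedSpace X] [Nontrivial X] (hX : IsIndecomposable X) (hS : IsSemicontinuum X)
    (𝒰 : ℕ → Set (Set X)) (h𝒰 : ∀ n, (𝒰 n).Finite) (hopen : ∀ n, ∀ U ∈ 𝒰 n, IsOpen U)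
    (hne : ∀ n, ∀ U ∈ 𝒰 n, U.Nonempty) :
    ∃ K : ℕ → Set X, (∀ n, IsCompact (K n) ∧ IsPreconnected (K n) ∧ K n ≠ univ) ∧
      Pairwise (Disjoint on K) ∧ ∀ n, ∀ U ∈ 𝒰 n, (K n ∩ U).Nonempty := by
  by_cases hc : CompactSpace X
  · have := UniformSpace.secondCountable_of_separable X
    exact hX.exists_pairwise_disjoint_of_compactSpace 𝒰 h𝒰 hopen hne
  · exact hX.exists_pairwise_disjoint_of_not_compactSpace hS hc 𝒰 h𝒰 hopen hne

theorem tendsto_infDist_of_forall_inter_ball_nonempty {q : ℕ → X} (hq : DenseRange q)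
    {K : ℕ → Set X} (hK : ∀ n, ∀ i ≤ n, (K n ∩ ball (q i) (1 / (n + 1))).Nonempty) (x : X) :
    Tendsto (fun n ↦ infDist x (K n)) atTop (𝓝 0) := by
  refine Metric.tendsto_atTop.2 fun ε hε ↦ ?_
  obtain ⟨i, hi⟩ := hq.exists_mem_open isOpen_ball (nonempty_ball.2 (half_pos hε))
  obtain ⟨N, hN⟩ := exists_nat_one_div_lt (half_pos hε)
  refine ⟨max i N, fun n hn ↦ ?_⟩
  obtain ⟨p, hpK, hpq⟩ := hK n i (le_of_max_le_left hn)
  have hnN : (1 : ℝ) / (n + 1) ≤ 1 / (N + 1) := by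
    gcongr
    exact_mod_cast le_of_max_le_right hn
  rw [Real.dist_0_eq_abs, abs_of_nonneg infDist_nonneg]
  calc infDist x (K n) ≤ dist x p := infDist_le_dist_of_mem hpK
    _ ≤ dist x (q i) + dist p (q i) := dist_triangle_right x p (q i)
    _ < ε / 2 + ε / 2 := by
      gcongr
      · exact mem_ball'.1 hi
      · exact (mem_ball.1 hpq).trans_le (hnN.trans hN.le)
    _ = ε := add_halves ε

end Metric

/-- Let `(X, d)` be a separable metric space which is an indecomposable
semicontinuum with more than one point. Then there is a sequence of pairwise disjoint proper
subcontinua `K n` of `X` such that `d(x, K n) → 0` for every `x ∈ X`. -/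
theorem stmt_3 {X : Type*} [MetricSpace X] [TopologicalSpace.SeparableSpace X]
    [ConnectedSpace X] [Nontrivial X]
    (hsemi : ∀ x y : X, ∃ K : Set X,
      IsCompact K ∧ IsConnected K ∧ K.Nontrivial ∧ x ∈ K ∧ y ∈ K)
    (hindec : ¬ ∃ A B : Set X,
      IsClosed A ∧ IsConnected A ∧ A ≠ Set.univ ∧
      IsClosed B ∧ IsConnected B ∧ B ≠ Set.univ ∧ A ∪ B = Set.univ) :
    ∃ K : ℕ → Set X,
      (∀ n, IsCompact (K n) ∧ IsConnected (K n) ∧ (K n).Nontrivial ∧ K n ≠ Set.univ) ∧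
      (∀ m n, m ≠ n → Disjoint (K m) (K n)) ∧
      (∀ x : X, Filter.Tendsto (fun n => Metric.infDist x (K n)) Filter.atTop (nhds 0)) := by
  obtain ⟨q, hq⟩ := TopologicalSpace.exists_dense_seq X
  obtain ⟨a, b, hab⟩ := exists_pair_ne X
  obtain ⟨U₀, U₁, hU₀, hU₁, ha, hb, hU⟩ := t2_separation hab
  -- `U₀` and `U₁` force nontriviality, the balls force the convergence
  let 𝒰 : ℕ → Set (Set X) := fun n ↦
    insert U₀ (insert U₁ (range fun i : Fin (n + 1) ↦ ball (q i) (1 / (n + 1))))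
  obtain ⟨K, hK, hdisj, hKU⟩ := IsIndecomposable.exists_pairwise_disjoint hindec hsemi 𝒰
    (fun n ↦ ((finite_range _).insert _).insert _)
    (fun n ↦ by rintro U (rfl | rfl | ⟨i, rfl⟩); exacts [hU₀, hU₁, isOpen_ball])
    (fun n ↦ by
      rintro U (rfl | rfl | ⟨i, rfl⟩)
      exacts [⟨a, ha⟩, ⟨b, hb⟩, nonempty_ball.2 (by positivity)])
  refine ⟨K, fun n ↦ ?_, fun m n ↦ @hdisj m n, tendsto_infDist_of_forall_inter_ball_nonempty hq
    fun n i hi ↦ hKU n _ (Or.inr (Or.inr ⟨⟨i, Nat.lt_succ_of_le hi⟩, rfl⟩))⟩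
  obtain ⟨hKc, hKp, hKu⟩ := hK n
  obtain ⟨u₀, hu₀K, hu₀⟩ := hKU n U₀ (Or.inl rfl)
  obtain ⟨u₁, hu₁K, hu₁⟩ := hKU n U₁ (Or.inr (Or.inl rfl))
  exact ⟨hKc, ⟨⟨u₀, hu₀K⟩, hKp⟩, ⟨u₀, hu₀K, u₁, hu₁K, hU.ne_of_mem hu₀ hu₁⟩, hKu⟩
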